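/- Let M be an A-module satisfying (I1)–(I4) and let m ∈ M. Then there exists a unique M' ∈ M such that M̄' = M' and M' ≡ m mod M_{<0}. -/

import Mathlib

/-!
Uniqueness: a bar-invariant element of `M_{<0}` vanishes, because at a maximal `x` of its
support (I3) makes its `m_x`-coefficient `a ∈ A_{<0}` satisfy `ā = a`, forcing `a = 0`.
Existence: `M' = m + n` where `n ∈ M_{<0}` solves `n - n̄ = m̄ - m`. Such an `n` exists for every
`d` with `d + d̄ = 0`: the `m_x`-coefficient `c` of `d` at a maximal `x` satisfies `c + c̄ = 0`,
hence `c = b - b̄` with `b ∈ A_{<0}`, and subtracting `b m_x - bar (b m_x)` removes `x` from a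
lower set containing the support of `d`; by (I4) such a lower set can be chosen finite.
-/

open scoped Classical

noncomputable section

namespace CellsCacti

/-- The group algebra `A = ℤ[𝔄]` of a totally ordered abelian group `𝔄`,
written exponentially: `A = ⊕_{a ∈ 𝔄} ℤ vᵃ`. -/
abbrev GA (𝔄 : Type*) [AddCommGroup 𝔄] [LinearOrder 𝔄] [IsOrderedAddMonoid 𝔄] := AddMonoidAlgebra ℤ 𝔄

variable {𝔄 : Type*} [AddCommGroup 𝔄] [LinearOrder 𝔄] [IsOrderedAddMonoid 𝔄]

/-- The element `vᵃ` of `A = ℤ[𝔄]`. -/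
def v (a : 𝔄) : GA 𝔄 := AddMonoidAlgebra.single a 1

/-- The bar involution of `A = ℤ[𝔄]`, determined by `vᵃ ↦ v⁻ᵃ`. -/
def Abar : GA 𝔄 ≃ₐ[ℤ] GA 𝔄 := AddMonoidAlgebra.domCongr ℤ ℤ (AddEquiv.neg 𝔄)

/-- `A_{<0} = ⊕_{a < 0} ℤ vᵃ`, as a predicate on elements of `A`. -/
def Aneg (a : GA 𝔄) : Prop := ∀ γ ∈ a.coeff.support, γ < (0 : 𝔄)

/-- The setting of Section 2 of "Cells and cacti": an `A`-module `M` with an `A`-basis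
`(m_x)_{x ∈ X}` indexed by a poset `X` (hypothesis (I1)), endowed with a `bar`-semilinear
involution (hypothesis (I2)) satisfying the triangularity condition (I3), such that lower
intervals of `X` are finite (hypothesis (I4)). -/
structure BarModule (𝔄 : Type*) [AddCommGroup 𝔄] [LinearOrder 𝔄] [IsOrderedAddMonoid 𝔄] (X : Type*) [PartialOrder X]
    (Mod : Type*) [AddCommGroup Mod] [Module (GA 𝔄) Mod] where
  /-- (I1): the `A`-basis `(m_x)_{x ∈ X}` of `M`. -/
  m : Module.Basis X (GA 𝔄) Mod
  /-- (I2): a semilinear involution of `M` (additivity). -/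
  bar : Mod →+ Mod
  /-- (I2): semilinearity of the involution with respect to the bar involution of `A`. -/
  bar_smul : ∀ (a : GA 𝔄) (x : Mod), bar (a • x) = Abar a • bar x
  /-- (I2): `bar` is an involution. -/
  bar_invol : ∀ x : Mod, bar (bar x) = x
  /-- (I3): `bar m_x ≡ m_x` modulo `⊕_{y < x} A m_y`. -/
  I3 : ∀ x : X, bar (m x) - m x ∈ Submodule.span (GA 𝔄) (m '' {y | y < x})
  /-- (I4): the set `{y | y ≤ x}` is finite. -/
  I4 : ∀ x : X, {y | y ≤ x}.Finite

variable {X : Type*} [PartialOrder X] {Mod : Type*} [AddCommGroup Mod] [Module (GA 𝔄) Mod]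

/-- `M_{<0} = ⊕_{x ∈ X} A_{<0} m_x`. -/
def BarModule.Mneg (S : BarModule 𝔄 X Mod) : Set Mod :=
  {u | ∀ x : X, Aneg (S.m.repr u x)}

/-- `M_skew = {m ∈ M | m + bar m = 0}`. -/
def BarModule.Mskew (S : BarModule 𝔄 X Mod) : Set Mod :=
  {u | u + S.bar u = 0}

lemma coeff_Abar (a : GA 𝔄) (γ : 𝔄) : (Abar a).coeff γ = a.coeff (-γ) := by
  simp [Abar]

lemma Aneg_zero : Aneg (0 : GA 𝔄) := by
  simp [Aneg]

lemma Aneg.add {a b : GA 𝔄} (ha : Aneg a) (hb : Aneg b) : Aneg (a + b) := fun γ hγ =>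
  (Finset.mem_union.1 (Finsupp.support_add hγ)).elim (ha γ) (hb γ)

lemma Aneg.sub {a b : GA 𝔄} (ha : Aneg a) (hb : Aneg b) : Aneg (a - b) := fun γ hγ => by
  rw [AddMonoidAlgebra.coeff_sub] at hγ
  exact (Finset.mem_union.1 (Finsupp.support_sub hγ)).elim (ha γ) (hb γ)

lemma Aneg.eq_zero_of_Abar_eq {a : GA 𝔄} (ha : Aneg a) (h : Abar a = a) : a = 0 := by
  ext γ
  by_contra hγ
  have hsymm : a.coeff (-γ) = a.coeff γ := by rw [← coeff_Abar, h]
  exact lt_asymm (ha γ (Finsupp.mem_support_iff.2 hγ))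
    (neg_neg_iff_pos.1 (ha (-γ) (Finsupp.mem_support_iff.2 (hsymm ▸ hγ))))

/-- The witness is the part of `a` supported in negative degrees. -/
lemma exists_Aneg_sub_Abar_eq {a : GA 𝔄} (h : a + Abar a = 0) :
    ∃ b : GA 𝔄, Aneg b ∧ b - Abar b = a := by
  have hanti (γ : 𝔄) : a.coeff γ + a.coeff (-γ) = 0 := by
    simpa [coeff_Abar] using congrArg (fun c : GA 𝔄 => c.coeff γ) h
  refine ⟨AddMonoidAlgebra.ofCoeff (a.coeff.filter (· < 0)), fun γ hγ => ?_, ?_⟩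
  · by_contra hneg
    simp [hneg] at hγ
  · ext γ
    rw [AddMonoidAlgebra.coeff_sub, Finsupp.sub_apply, coeff_Abar, AddMonoidAlgebra.coeff_ofCoeff,
      Finsupp.filter_apply, Finsupp.filter_apply]
    rcases lt_trichotomy γ 0 with hγ | rfl | hγ
    · simp [hγ, hγ.not_gt]
    · have := hanti 0
      simp only [neg_zero, lt_self_iff_false, ite_false] at this ⊢
      omega
    · have := hanti γ
      simp only [hγ.not_gt, ↓reduceIte, Left.neg_neg_iff, hγ, zero_sub]
      omega

namespace BarModule

variable (S : BarModule 𝔄 X Mod)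

lemma zero_mem_Mneg : (0 : Mod) ∈ S.Mneg := fun x => by
  simpa using Aneg_zero

lemma add_mem_Mneg {u w : Mod} (hu : u ∈ S.Mneg) (hw : w ∈ S.Mneg) : u + w ∈ S.Mneg := fun x => by
  simpa only [map_add, Finsupp.add_apply] using (hu x).add (hw x)

lemma sub_mem_Mneg {u w : Mod} (hu : u ∈ S.Mneg) (hw : w ∈ S.Mneg) : u - w ∈ S.Mneg := fun x => by
  simpa only [map_sub, Finsupp.sub_apply] using (hu x).sub (hw x)

lemma smul_basis_mem_Mneg {b : GA 𝔄} (hb : Aneg b) (x : X) : b • S.m x ∈ S.Mneg := fun y => by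
  rw [map_smul, S.m.repr_self, Finsupp.smul_single, smul_eq_mul, mul_one, Finsupp.single_apply]
  split_ifs
  exacts [hb, Aneg_zero]

lemma sub_bar_mem_Mskew (u : Mod) : u - S.bar u ∈ S.Mskew := by
  show u - S.bar u + S.bar (u - S.bar u) = 0
  rw [map_sub, S.bar_invol]
  abel

lemma sub_mem_Mskew {u w : Mod} (hu : u ∈ S.Mskew) (hw : w ∈ S.Mskew) : u - w ∈ S.Mskew := by
  show u - w + S.bar (u - w) = 0
  rw [map_sub, sub_add_sub_comm, hu, hw, sub_zero]

lemma repr_bar_basis_of_not_lt {x z : X} (h : ¬ x < z) :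
    S.m.repr (S.bar (S.m z)) x = S.m.repr (S.m z) x := by
  have hlower := S.m.repr_support_subset_of_mem_span _ (S.I3 z)
  rw [← sub_eq_zero, ← Finsupp.sub_apply, ← map_sub]
  exact Finsupp.notMem_support_iff.1 fun hx => h (hlower hx)

lemma support_repr_bar_basis_subset (x : X) :
    ↑(S.m.repr (S.bar (S.m x))).support ⊆ Set.Iic x := by
  intro y hy
  by_contra hyx
  rw [Finset.mem_coe, Finsupp.mem_support_iff, S.repr_bar_basis_of_not_lt fun h => hyx h.le,
    S.m.repr_self, Finsupp.single_apply, if_neg fun h => hyx h.ge] at hy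
  exact hy rfl

/-- By (I3), `m_x` is the only `m_z` with `z` in the support of `d` whose bar has a nonzero
`m_x`-coefficient. -/
lemma repr_bar_of_forall_not_lt {d : Mod} {x : X} (hx : ∀ z ∈ (S.m.repr d).support, ¬ x < z) :
    S.m.repr (S.bar d) x = Abar (S.m.repr d x) := by
  conv_lhs => rw [← S.m.linearCombination_repr d]
  rw [Finsupp.linearCombination_apply, Finsupp.sum, map_sum, map_sum, Finsupp.finsetSum_apply]
  simp_rw [S.bar_smul, map_smul, Finsupp.smul_apply]
  rw [Finset.sum_eq_single x]
  · rw [S.repr_bar_basis_of_not_lt (lt_irrefl x), S.m.repr_self, Finsupp.single_eq_same,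
      smul_eq_mul, mul_one]
  · intro z hz hzx
    rw [S.repr_bar_basis_of_not_lt (hx z hz), S.m.repr_self, Finsupp.single_apply, if_neg hzx,
      smul_zero]
  · intro hx
    rw [Finsupp.notMem_support_iff.1 hx, map_zero, zero_smul]

lemma eq_zero_of_mem_Mneg_of_bar_eq {d : Mod} (hd : d ∈ S.Mneg) (hbar : S.bar d = d) : d = 0 := by
  by_contra hne
  have hsupp : (S.m.repr d).support.Nonempty := by
    rwa [Finsupp.support_nonempty_iff, ne_eq, LinearEquiv.map_eq_zero_iff]
  obtain ⟨x, hx⟩ := Finset.exists_maximal hsupp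
  have htop := S.repr_bar_of_forall_not_lt fun z hz => hx.not_gt hz
  rw [hbar] at htop
  exact Finsupp.mem_support_iff.1 hx.prop ((hd x).eq_zero_of_Abar_eq htop.symm)

lemma repr_smul_basis_sub_bar (b : GA 𝔄) (x : X) :
    S.m.repr (b • S.m x - S.bar (b • S.m x)) x = b - Abar b := by
  rw [S.bar_smul, map_sub, map_smul, map_smul, Finsupp.sub_apply, Finsupp.smul_apply,
    Finsupp.smul_apply, S.repr_bar_basis_of_not_lt (lt_irrefl x), S.m.repr_self,
    Finsupp.single_eq_same]
  simp only [smul_eq_mul, mul_one]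

lemma support_repr_smul_basis_sub_bar_subset (b : GA 𝔄) (x : X) :
    ↑(S.m.repr (b • S.m x - S.bar (b • S.m x))).support ⊆ Set.Iic x := by
  rw [S.bar_smul, map_sub, map_smul, map_smul, S.m.repr_self]
  refine (Finset.coe_subset.2 Finsupp.support_sub).trans ?_
  rw [Finset.coe_union]
  refine Set.union_subset ?_ ((Finset.coe_subset.2 Finsupp.support_smul).trans
    (S.support_repr_bar_basis_subset x))
  intro y hy
  rw [Finset.mem_coe, Finsupp.smul_single, Finsupp.mem_support_iff, Finsupp.single_apply] at hy
  split_ifs at hy with hxy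
  · exact hxy ▸ le_rfl
  · exact absurd rfl hy

lemma exists_mem_Mneg_sub_bar_eq_of_support_subset (Y : Finset X) (hY : IsLowerSet (Y : Set X))
    {d : Mod} (hd : d ∈ S.Mskew) (hdY : ↑(S.m.repr d).support ⊆ (Y : Set X)) :
    ∃ n ∈ S.Mneg, n - S.bar n = d := by
  induction Y using Finset.strongInduction generalizing d with
  | H Y ih =>
  obtain rfl | hYne := Y.eq_empty_or_nonempty
  · have hd0 : d = 0 := by simpa using hdY
    exact ⟨0, S.zero_mem_Mneg, by simp [hd0]⟩
  obtain ⟨x, hx⟩ := Y.exists_maximal hYne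
  have htop : S.m.repr d x + Abar (S.m.repr d x) = 0 := by
    have := congrArg (fun u => S.m.repr u x) hd
    simpa [S.repr_bar_of_forall_not_lt fun z hz => hx.not_gt (hdY hz)] using this
  obtain ⟨b, hb, hbd⟩ := exists_Aneg_sub_Abar_eq htop
  set w := b • S.m x - S.bar (b • S.m x) with hw
  have hwx : S.m.repr (d - w) x = 0 := by
    rw [map_sub, Finsupp.sub_apply, S.repr_smul_basis_sub_bar, hbd, sub_self]
  have hsupp : ↑(S.m.repr (d - w)).support ⊆ (↑(Y.erase x) : Set X) := by
    intro y hy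
    rw [Finset.coe_erase]
    refine ⟨?_, fun hyx => Finsupp.mem_support_iff.1 hy (Set.mem_singleton_iff.1 hyx ▸ hwx)⟩
    rw [map_sub] at hy
    rcases Finset.mem_union.1 (Finsupp.support_sub hy) with hyd | hyw
    · exact hdY hyd
    · exact hY (S.support_repr_smul_basis_sub_bar_subset b x hyw) hx.prop
  have hYx : IsLowerSet (↑(Y.erase x) : Set X) := by
    rw [Finset.coe_erase]
    exact hY.erase fun y hy hxy => hx.eq_of_ge hy hxy
  obtain ⟨n, hn, hnd⟩ := ih _ (Y.erase_ssubset hx.prop) hYx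
    (S.sub_mem_Mskew hd (S.sub_bar_mem_Mskew _)) hsupp
  refine ⟨b • S.m x + n, S.add_mem_Mneg (S.smul_basis_mem_Mneg hb x) hn, ?_⟩
  calc b • S.m x + n - S.bar (b • S.m x + n) = w + (n - S.bar n) := by rw [hw, map_add]; abel
    _ = d := by rw [hnd, hw]; abel

lemma exists_mem_Mneg_sub_bar_eq {d : Mod} (hd : d ∈ S.Mskew) : ∃ n ∈ S.Mneg, n - S.bar n = d := by
  have hfin : (lowerClosure (↑(S.m.repr d).support : Set X) : Set X).Finite := by
    rw [coe_lowerClosure]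
    exact (Finset.finite_toSet _).biUnion fun z _ => S.I4 z
  obtain ⟨Y, hY⟩ := hfin.exists_finset_coe
  exact S.exists_mem_Mneg_sub_bar_eq_of_support_subset Y (hY ▸ (lowerClosure _).lower) hd
    (hY ▸ subset_lowerClosure)

end BarModule

/-- **Corollary 2.3** (cells and cacti): for every `m ∈ M` there exists a unique `M' ∈ M`
such that `bar M' = M'` and `M' ≡ m mod M_{<0}`. -/
theorem coro_anti_stable (S : BarModule 𝔄 X Mod) (m : Mod) :
    ∃! M' : Mod, S.bar M' = M' ∧ M' - m ∈ S.Mneg := by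
  obtain ⟨n, hn, hnm⟩ := S.exists_mem_Mneg_sub_bar_eq (S.sub_bar_mem_Mskew (S.bar m))
  rw [S.bar_invol] at hnm
  have hbar : S.bar (m + n) = m + n := by
    rw [map_add, show S.bar n = n - (S.bar m - m) by rw [← hnm]; abel]
    abel
  refine ⟨m + n, ⟨hbar, by rwa [add_sub_cancel_left]⟩, ?_⟩
  rintro M' ⟨hM', hM'm⟩
  have hdiff : M' - (m + n) ∈ S.Mneg := by
    simpa only [sub_sub] using S.sub_mem_Mneg hM'm hn
  exact sub_eq_zero.1 (S.eq_zero_of_mem_Mneg_of_bar_eq hdiff (by rw [map_sub, hM', hbar]))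

end CellsCacti
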